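/- Let 0 < β₀ ≤ β₁ with β₀ ≤ a(x) ≤ β₁ and β₀ ≤ ã(x) ≤ β₁ for all x ∈ Ω, let c₀ > 0, h > 0, M ≥ 0 with μ(ω) ≤ c₀ h² and ‖∇u(x)‖ ≤ M for almost every x ∈ ω. Let u, ũ : ℝ² → ℝ be differentiable functions such that B(u,u) = B̃(ũ,u) and B(u,ũ) = B̃(ũ,ũ). Then |∫_Ω a ‖∇u‖² dx − ∫_Ω ã ‖∇ũ‖² dx| ≤ |a₀ − a₁| · √c₀ · M · (β₁/β₀) · (∫_Ω ‖∇u‖² dx)^{1/2} · h. -/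

import Mathlib

/-!
Subtracting the two identities gives
`∫_Ω a ‖∇u‖² - ∫_Ω ã ‖∇ũ‖² = ∫_Ω (ã - a) ⟪∇ũ, ∇u⟫ = (a₀ - a₁) ∫_ω ⟪∇ũ, ∇u⟫`,
because `ã - a` vanishes off `ω`. On `ω`, the bound `‖∇u‖ ≤ M` and Cauchy–Schwarz give
`|∫_ω ⟪∇ũ, ∇u⟫| ≤ M √μ(ω) ‖∇ũ‖_{L²}` with `√μ(ω) ≤ √c₀ h`. Finally, testing
`B(u, ũ) = B̃(ũ, ũ)` with the bounds on the coefficients gives `β₀ ‖∇ũ‖² ≤ β₁ ‖∇u‖ ‖∇ũ‖`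
in `L²(Ω)`, i.e. `‖∇ũ‖_{L²} ≤ (β₁ / β₀) ‖∇u‖_{L²}`.
-/

open MeasureTheory
open scoped RealInnerProductSpace

theorem measurable_gradient {E : Type*} [NormedAddCommGroup E] [InnerProductSpace ℝ E]
    [CompleteSpace E] [MeasurableSpace E] [BorelSpace E] (f : E → ℝ) :
    Measurable (gradient f) :=
  (InnerProductSpace.toDual ℝ E).symm.continuous.measurable.comp (measurable_fderiv ℝ f)

section

variable {α : Type*} [MeasurableSpace α] {μ : Measure α}

theorem integral_mul_le_sqrt_mul_sqrt_of_nonneg {f g : α → ℝ} (hf0 : 0 ≤ᵐ[μ] f)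
    (hg0 : 0 ≤ᵐ[μ] g) (hf : MemLp f 2 μ) (hg : MemLp g 2 μ) :
    ∫ x, f x * g x ∂μ ≤ √(∫ x, f x ^ 2 ∂μ) * √(∫ x, g x ^ 2 ∂μ) := by
  have := integral_mul_le_Lp_mul_Lq_of_nonneg Real.HolderConjugate.two_two hf0 hg0
    (by simpa using hf) (by simpa using hg)
  simpa only [Real.rpow_two, Real.sqrt_eq_rpow] using this

theorem setIntegral_mul_of_eqOn_indicator_const {Ω ω : Set α} (hΩ : MeasurableSet Ω)
    (hω : MeasurableSet ω) (hωΩ : ω ⊆ Ω) {k φ : α → ℝ} {c : ℝ}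
    (hk : Set.EqOn k (ω.indicator fun _ => c) Ω) :
    ∫ x in Ω, k x * φ x ∂μ = c * ∫ x in ω, φ x ∂μ := by
  calc ∫ x in Ω, k x * φ x ∂μ = ∫ x in Ω, ω.indicator (fun x => c * φ x) x ∂μ :=
        setIntegral_congr_fun hΩ fun x hx => by
          rw [hk hx, ← Set.indicator_mul_left]
    _ = c * ∫ x in ω, φ x ∂μ := by
      rw [setIntegral_indicator hω, Set.inter_eq_right.2 hωΩ, integral_const_mul]

variable {E : Type*} [NormedAddCommGroup E] [InnerProductSpace ℝ E]

theorem abs_integral_inner_le_of_norm_le [IsFiniteMeasure μ] {p q : α → E} {M : ℝ}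
    (hM0 : 0 ≤ M) (hp : ∀ᵐ x ∂μ, ‖p x‖ ≤ M) (hq : AEStronglyMeasurable q μ)
    (hq2 : Integrable (fun x => ‖q x‖ ^ 2) μ) :
    |∫ x, ⟪q x, p x⟫ ∂μ| ≤ M * √(μ.real Set.univ) * √(∫ x, ‖q x‖ ^ 2 ∂μ) := by
  have hqL2 : MemLp (fun x => ‖q x‖) 2 μ := (memLp_two_iff_integrable_sq hq.norm).2 hq2
  calc |∫ x, ⟪q x, p x⟫ ∂μ| ≤ ∫ x, M * ‖q x‖ ∂μ := by
        rw [← Real.norm_eq_abs]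
        refine norm_integral_le_of_norm_le ((hqL2.integrable one_le_two).const_mul M) ?_
        filter_upwards [hp] with x hx
        calc ‖⟪q x, p x⟫‖ ≤ ‖q x‖ * ‖p x‖ := norm_inner_le_norm (𝕜 := ℝ) _ _
          _ ≤ M * ‖q x‖ := by rw [mul_comm]; gcongr
    _ = M * ∫ x, 1 * ‖q x‖ ∂μ := by simp only [one_mul, integral_const_mul]
    _ ≤ M * (√(∫ _, (1 : ℝ) ^ 2 ∂μ) * √(∫ x, ‖q x‖ ^ 2 ∂μ)) := by
        gcongr
        exact integral_mul_le_sqrt_mul_sqrt_of_nonneg (.of_forall fun _ => zero_le_one)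
          (.of_forall fun _ => norm_nonneg _) (memLp_const 1) hqL2
    _ = M * √(μ.real Set.univ) * √(∫ x, ‖q x‖ ^ 2 ∂μ) := by simp [mul_assoc]

theorem sqrt_integral_norm_sq_le_of_integral_mul_inner_eq {p q : α → E} {a ã : α → ℝ}
    {β₀ β₁ : ℝ} (hβ₀ : 0 < β₀) (hβ : β₀ ≤ β₁) (ha : ∀ᵐ x ∂μ, |a x| ≤ β₁)
    (hã : ∀ᵐ x ∂μ, β₀ ≤ ã x) (hp : AEStronglyMeasurable p μ) (hq : AEStronglyMeasurable q μ)
    (hp2 : Integrable (fun x => ‖p x‖ ^ 2) μ) (hq2 : Integrable (fun x => ‖q x‖ ^ 2) μ)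
    (hapq : Integrable (fun x => a x * ⟪p x, q x⟫) μ)
    (hãq : Integrable (fun x => ã x * ‖q x‖ ^ 2) μ)
    (hB : ∫ x, a x * ⟪p x, q x⟫ ∂μ = ∫ x, ã x * ‖q x‖ ^ 2 ∂μ) :
    √(∫ x, ‖q x‖ ^ 2 ∂μ) ≤ β₁ / β₀ * √(∫ x, ‖p x‖ ^ 2 ∂μ) := by
  set S := √(∫ x, ‖p x‖ ^ 2 ∂μ)
  set T := √(∫ x, ‖q x‖ ^ 2 ∂μ)
  have hβ₁ : 0 ≤ β₁ := hβ₀.le.trans hβ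
  have hpL2 : MemLp (fun x => ‖p x‖) 2 μ := (memLp_two_iff_integrable_sq hp.norm).2 hp2
  have hqL2 : MemLp (fun x => ‖q x‖) 2 μ := (memLp_two_iff_integrable_sq hq.norm).2 hq2
  have hcoercive : β₀ * T ^ 2 ≤ β₁ * (S * T) :=
    calc β₀ * T ^ 2 = ∫ x, β₀ * ‖q x‖ ^ 2 ∂μ := by
          rw [Real.sq_sqrt (integral_nonneg fun _ => sq_nonneg _), integral_const_mul]
      _ ≤ ∫ x, ã x * ‖q x‖ ^ 2 ∂μ := by
          refine integral_mono_ae (hq2.const_mul β₀) hãq ?_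
          filter_upwards [hã] with x hx
          exact mul_le_mul_of_nonneg_right hx (sq_nonneg _)
      _ = ∫ x, a x * ⟪p x, q x⟫ ∂μ := hB.symm
      _ ≤ ∫ x, β₁ * (‖p x‖ * ‖q x‖) ∂μ := by
          refine integral_mono_ae hapq ((hpL2.integrable_mul hqL2).const_mul β₁) ?_
          filter_upwards [ha] with x hx
          calc a x * ⟪p x, q x⟫ ≤ |a x| * |⟪p x, q x⟫| := (le_abs_self _).trans (abs_mul _ _).le
            _ ≤ β₁ * (‖p x‖ * ‖q x‖) :=
              mul_le_mul hx (abs_real_inner_le_norm _ _) (abs_nonneg _) hβ₁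
      _ ≤ β₁ * (S * T) := by
          rw [integral_const_mul]
          gcongr
          simpa only [norm_pow, norm_norm] using integral_mul_le_sqrt_mul_sqrt_of_nonneg
            (.of_forall fun x => norm_nonneg (p x)) (.of_forall fun x => norm_nonneg (q x))
            hpL2 hqL2
  rcases (Real.sqrt_nonneg _).eq_or_lt with hT | hT
  · rw [show T = 0 from hT.symm]; positivity
  · rw [div_mul_eq_mul_div, le_div_iff₀ hβ₀]
    nlinarith

end

theorem stmt_6_general
    (Ω ω : Set (EuclideanSpace ℝ (Fin 2)))
    (hΩmeas : MeasurableSet Ω) (hΩfin : volume Ω < ⊤)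
    (hωmeas : MeasurableSet ω) (hωsub : ω ⊆ Ω)
    (a₀ a₁ : ℝ) (a atil : EuclideanSpace ℝ (Fin 2) → ℝ)
    (ha_eq : ∀ x ∈ Ω \ ω, a x = atil x)
    (ha_diff : ∀ x ∈ ω, atil x - a x = a₀ - a₁)
    (β₀ β₁ : ℝ) (hβ₀ : 0 < β₀) (hβ : β₀ ≤ β₁)
    (ha_bdd : ∀ x ∈ Ω, β₀ ≤ a x ∧ a x ≤ β₁)
    (hatil_bdd : ∀ x ∈ Ω, β₀ ≤ atil x ∧ atil x ≤ β₁)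
    (u util : EuclideanSpace ℝ (Fin 2) → ℝ)
    (c₀ h M : ℝ) (hh : 0 < h) (hM0 : 0 ≤ M)
    (hωvol : (volume ω).toReal ≤ c₀ * h ^ 2)
    (hM : ∀ᵐ x ∂volume.restrict ω, ‖gradient u x‖ ≤ M)
    (hint2 : IntegrableOn (fun x => atil x * ‖gradient util x‖ ^ 2) Ω)
    (hint3 : IntegrableOn (fun x => atil x * ⟪gradient util x, gradient u x⟫) Ω)
    (hint4 : IntegrableOn (fun x => a x * ⟪gradient u x, gradient util x⟫) Ω)
    (hint5 : IntegrableOn (fun x => ‖gradient u x‖ ^ 2) Ω)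
    (hint6 : IntegrableOn (fun x => ‖gradient util x‖ ^ 2) Ω)
    (hB1 : (∫ x in Ω, a x * ‖gradient u x‖ ^ 2)
        = ∫ x in Ω, atil x * ⟪gradient util x, gradient u x⟫)
    (hB2 : (∫ x in Ω, a x * ⟪gradient u x, gradient util x⟫)
        = ∫ x in Ω, atil x * ‖gradient util x‖ ^ 2) :
    |(∫ x in Ω, a x * ‖gradient u x‖ ^ 2) - ∫ x in Ω, atil x * ‖gradient util x‖ ^ 2|
      ≤ |a₀ - a₁| * Real.sqrt c₀ * M * (β₁ / β₀)
          * Real.sqrt (∫ x in Ω, ‖gradient u x‖ ^ 2) * h := by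
  have hjump : Set.EqOn (fun x => atil x - a x) (ω.indicator fun _ => a₀ - a₁) Ω := by
    intro x hx
    by_cases hxω : x ∈ ω
    · simp [hxω, ha_diff x hxω]
    · simp [hxω, ha_eq x ⟨hx, hxω⟩]
  have henergy_diff : (∫ x in Ω, a x * ‖gradient u x‖ ^ 2)
      - ∫ x in Ω, atil x * ‖gradient util x‖ ^ 2
      = (a₀ - a₁) * ∫ x in ω, ⟪gradient util x, gradient u x⟫ := by
    rw [hB1, ← hB2, ← integral_sub hint3 hint4,
      ← setIntegral_mul_of_eqOn_indicator_const hΩmeas hωmeas hωsub hjump]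
    refine integral_congr_ae (.of_forall fun x => ?_)
    simp only [real_inner_comm (gradient u x)]
    ring
  have : IsFiniteMeasure (volume.restrict ω) :=
    isFiniteMeasure_restrict.2 ((measure_mono hωsub).trans_lt hΩfin).ne
  have hlocal := abs_integral_inner_le_of_norm_le hM0 hM
    (measurable_gradient util).aestronglyMeasurable (hint6.mono_set hωsub)
  have hstability := sqrt_integral_norm_sq_le_of_integral_mul_inner_eq hβ₀ hβ
    (ae_restrict_of_forall_mem hΩmeas fun x hx =>
      abs_le.2 ⟨by linarith [ha_bdd x hx], (ha_bdd x hx).2⟩)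
    (ae_restrict_of_forall_mem hΩmeas fun x hx => (hatil_bdd x hx).1)
    (measurable_gradient u).aestronglyMeasurable (measurable_gradient util).aestronglyMeasurable
    hint5 hint6 hint4 hint2 hB2
  have hvol : √(volume.real ω) ≤ √c₀ * h := by
    rw [← Real.sqrt_sq hh.le, ← Real.sqrt_mul' _ (sq_nonneg h)]
    exact Real.sqrt_le_sqrt hωvol
  have hrestrict : √(∫ x in ω, ‖gradient util x‖ ^ 2) ≤ √(∫ x in Ω, ‖gradient util x‖ ^ 2) :=
    Real.sqrt_le_sqrt <| setIntegral_mono_set hint6 (.of_forall fun _ => sq_nonneg _)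
      hωsub.eventuallyLE
  rw [measureReal_restrict_apply_univ] at hlocal
  rw [henergy_diff, abs_mul]
  calc |a₀ - a₁| * |∫ x in ω, ⟪gradient util x, gradient u x⟫|
      ≤ |a₀ - a₁| * (M * (√c₀ * h) * (β₁ / β₀ * √(∫ x in Ω, ‖gradient u x‖ ^ 2))) := by
        gcongr
        exact hlocal.trans (by gcongr; exact hrestrict.trans hstability)
    _ = _ := by ring

theorem stmt_6
    (Ω ω : Set (EuclideanSpace ℝ (Fin 2)))
    (hΩmeas : MeasurableSet Ω) (hΩfin : volume Ω < ⊤)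
    (hωmeas : MeasurableSet ω) (hωsub : ω ⊆ Ω)
    (a₀ a₁ : ℝ) (a atil : EuclideanSpace ℝ (Fin 2) → ℝ)
    (hameas : Measurable a) (hatilmeas : Measurable atil)
    (ha_eq : ∀ x ∈ Ω \ ω, a x = atil x)
    (ha_diff : ∀ x ∈ ω, atil x - a x = a₀ - a₁)
    (β₀ β₁ : ℝ) (hβ₀ : 0 < β₀) (hβ : β₀ ≤ β₁)
    (ha_bdd : ∀ x ∈ Ω, β₀ ≤ a x ∧ a x ≤ β₁)
    (hatil_bdd : ∀ x ∈ Ω, β₀ ≤ atil x ∧ atil x ≤ β₁)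
    (u util : EuclideanSpace ℝ (Fin 2) → ℝ)
    (hu : Differentiable ℝ u) (hutil : Differentiable ℝ util)
    (c₀ h M : ℝ) (hc₀ : 0 < c₀) (hh : 0 < h) (hM0 : 0 ≤ M)
    (hωvol : (volume ω).toReal ≤ c₀ * h ^ 2)
    (hM : ∀ᵐ x ∂volume.restrict ω, ‖gradient u x‖ ≤ M)
    (hint1 : IntegrableOn (fun x => a x * ‖gradient u x‖ ^ 2) Ω)
    (hint2 : IntegrableOn (fun x => atil x * ‖gradient util x‖ ^ 2) Ω)
    (hint3 : IntegrableOn (fun x => atil x * ⟪gradient util x, gradient u x⟫) Ω)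
    (hint4 : IntegrableOn (fun x => a x * ⟪gradient u x, gradient util x⟫) Ω)
    (hint5 : IntegrableOn (fun x => ‖gradient u x‖ ^ 2) Ω)
    (hint6 : IntegrableOn (fun x => ‖gradient util x‖ ^ 2) Ω)
    (hB1 : (∫ x in Ω, a x * ‖gradient u x‖ ^ 2)
        = ∫ x in Ω, atil x * ⟪gradient util x, gradient u x⟫)
    (hB2 : (∫ x in Ω, a x * ⟪gradient u x, gradient util x⟫)
        = ∫ x in Ω, atil x * ‖gradient util x‖ ^ 2) :
    |(∫ x in Ω, a x * ‖gradient u x‖ ^ 2) - ∫ x in Ω, atil x * ‖gradient util x‖ ^ 2|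
      ≤ |a₀ - a₁| * Real.sqrt c₀ * M * (β₁ / β₀)
          * Real.sqrt (∫ x in Ω, ‖gradient u x‖ ^ 2) * h :=
  stmt_6_general Ω ω hΩmeas hΩfin hωmeas hωsub a₀ a₁ a atil ha_eq ha_diff β₀ β₁ hβ₀ hβ ha_bdd
    hatil_bdd u util c₀ h M hh hM0 hωvol hM hint2 hint3 hint4 hint5 hint6 hB1 hB2
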